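/- Let T be an M×N complex full spark matrix (M ≤ N), and let S be any subset of {1,…,N} of size K_f with K_f ≤ M² and K_f < 2M. Then the M²×K_f matrix D whose columns are t̄_j ⊗ t_j for j ∈ S has full column rank K_f. -/

import Mathlib

/-!
A relation `∑ j ∈ S, g j • (t̄ⱼ ⊗ tⱼ) = 0` makes the Hermitian form `a ↦ ∑ j ∈ S, g j * |a ⬝ᵥ tⱼ|²`
vanish identically, hence also its real and imaginary parts, so it suffices to treat real weights
`c`. Since `#S < 2M`, fewer than `M` of the `c j` are positive, or fewer than `M` are negative;
say positive, on `P`. If some `c k < 0`, full spark makes `tₖ` independent of the `tⱼ`, `j ∈ P`,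
so some `a` kills those `tⱼ` but not `tₖ`, and then the form is negative at `a`.
-/

open Matrix

def khatriRaoConj {M N : ℕ} (T : Matrix (Fin M) (Fin N) ℂ) :
    Matrix (Fin M × Fin M) (Fin N) ℂ :=
  fun p j => (starRingEnd ℂ) (T p.1 j) * T p.2 j

def FullSpark {M N : ℕ} (T : Matrix (Fin M) (Fin N) ℂ) : Prop :=
  ∀ S : Finset (Fin N), S.card = M →
    LinearIndependent ℂ (fun j : S => T.transpose j.1)

open Finset ComplexConjugate

theorem LinearMap.apply_eq_dotProduct {R ι : Type*} [CommRing R] [Fintype ι] [DecidableEq ι]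
    (f : (ι → R) →ₗ[R] R) (v : ι → R) : f v = (fun i => f (Pi.single i 1)) ⬝ᵥ v := by
  have hsingle (i : ι) : (Pi.single i 1 : ι → R) = fun j => if i = j then 1 else 0 := by
    ext j; simp [Pi.single_apply, eq_comm]
  simp [f.pi_apply_eq_sum_univ v, dotProduct, hsingle, mul_comm]

theorem sum_mul_normSq_vecMul_eq_zero {M N : ℕ} {T : Matrix (Fin M) (Fin N) ℂ}
    {S : Finset (Fin N)} {g : Fin N → ℂ} (hg : ∑ j ∈ S, g j • (khatriRaoConj T)ᵀ j = 0)
    (a : Fin M → ℂ) : ∑ j ∈ S, g j * Complex.normSq ((a ᵥ* T) j) = 0 := by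
  have entry (p q : Fin M) : ∑ j ∈ S, g j * (conj (T p j) * T q j) = 0 := by
    simpa [khatriRaoConj, Finset.sum_apply] using congrFun hg (p, q)
  calc ∑ j ∈ S, g j * Complex.normSq ((a ᵥ* T) j)
      = ∑ p, ∑ q, conj (a p) * a q * ∑ j ∈ S, g j * (conj (T p j) * T q j) := by
        simp_rw [Complex.normSq_eq_conj_mul_self, vecMul, dotProduct, map_sum, map_mul,
          sum_mul_sum, mul_sum]
        rw [sum_comm]
        refine sum_congr rfl fun p _ => ?_
        rw [sum_comm]
        refine sum_congr rfl fun q _ => sum_congr rfl fun j _ => by ring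
    _ = 0 := by simp [entry]

namespace FullSpark

variable {M N : ℕ} {T : Matrix (Fin M) (Fin N) ℂ}

theorem linearIndepOn_of_card_le (hMN : M ≤ N) (hT : FullSpark T) {R : Finset (Fin N)}
    (hR : #R ≤ M) : LinearIndepOn ℂ Tᵀ (R : Set (Fin N)) := by
  obtain ⟨R', hRR', -, hR'⟩ := exists_subsuperset_card_eq (subset_univ R) hR (by simpa using hMN)
  exact LinearIndepOn.mono (hT R' hR') (by simpa using hRR')

theorem exists_vecMul_eq_zero_ne_zero (hMN : M ≤ N) (hT : FullSpark T) {P : Finset (Fin N)}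
    (hP : #P < M) {k : Fin N} (hk : k ∉ P) :
    ∃ a : Fin M → ℂ, (∀ j ∈ P, (a ᵥ* T) j = 0) ∧ (a ᵥ* T) k ≠ 0 := by
  classical
  have hind : LinearIndepOn ℂ Tᵀ (insert k P : Set (Fin N)) := by
    simpa using hT.linearIndepOn_of_card_le hMN (R := insert k P) (by grind [card_insert_le])
  have hspan : Tᵀ k ∉ Submodule.span ℂ (Tᵀ '' P) :=
    ((hind.mono (Set.subset_insert _ _)).notMem_span_iff).2 ⟨hind, hk⟩
  obtain ⟨f, hfk, hPf⟩ := Submodule.exists_le_ker_of_notMem hspan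
  have hvec (j : Fin N) : f (Tᵀ j) = ((fun i => f (Pi.single i 1)) ᵥ* T) j := by
    rw [f.apply_eq_dotProduct]; rfl
  refine ⟨_, fun j hj => ?_, by rwa [← hvec]⟩
  rw [← hvec]
  exact hPf (Submodule.subset_span ⟨j, hj, rfl⟩)

theorem nonneg_of_card_pos_lt (hMN : M ≤ N) (hT : FullSpark T) {S : Finset (Fin N)}
    {c : Fin N → ℝ} (hc : ∀ a : Fin M → ℂ, ∑ j ∈ S, c j * Complex.normSq ((a ᵥ* T) j) = 0)
    (hpos : #{j ∈ S | 0 < c j} < M) : ∀ k ∈ S, 0 ≤ c k := by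
  intro k hk
  by_contra! hck
  obtain ⟨a, ha, hak⟩ :=
    hT.exists_vecMul_eq_zero_ne_zero hMN hpos (k := k) (by simp [hck.le.not_gt])
  have hterm (j : Fin N) (hj : j ∈ S) : c j * Complex.normSq ((a ᵥ* T) j) ≤ 0 := by
    rcases le_or_gt (c j) 0 with hcj | hcj
    · exact mul_nonpos_of_nonpos_of_nonneg hcj (Complex.normSq_nonneg _)
    · simp [ha j (mem_filter.2 ⟨hj, hcj⟩)]
  have hneg : ∑ j ∈ S, c j * Complex.normSq ((a ᵥ* T) j) < 0 :=
    (sum_lt_sum hterm ⟨k, hk, mul_neg_of_neg_of_pos hck (Complex.normSq_pos.2 hak)⟩).trans_eq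
      sum_const_zero
  exact hneg.ne (hc a)

theorem eq_zero_of_card_pos_lt (hMN : M ≤ N) (hT : FullSpark T) {S : Finset (Fin N)}
    {c : Fin N → ℝ} (hc : ∀ a : Fin M → ℂ, ∑ j ∈ S, c j * Complex.normSq ((a ᵥ* T) j) = 0)
    (hpos : #{j ∈ S | 0 < c j} < M) : ∀ k ∈ S, c k = 0 := by
  have hnonneg := hT.nonneg_of_card_pos_lt hMN hc hpos
  have hneg : #{j ∈ S | 0 < -c j} < M := by
    rw [filter_false_of_mem fun j hj => by simpa using hnonneg j hj]
    exact (Nat.zero_le _).trans_lt hpos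
  have hnonpos := hT.nonneg_of_card_pos_lt (c := fun j => -c j) hMN (by simpa using hc) hneg
  exact fun k hk => le_antisymm (by simpa using hnonpos k hk) (hnonneg k hk)

theorem eq_zero_of_sum_mul_normSq_eq_zero (hMN : M ≤ N) (hT : FullSpark T)
    {S : Finset (Fin N)} (hS : #S < 2 * M) {c : Fin N → ℝ}
    (hc : ∀ a : Fin M → ℂ, ∑ j ∈ S, c j * Complex.normSq ((a ᵥ* T) j) = 0) :
    ∀ k ∈ S, c k = 0 := by
  have hsplit : #{j ∈ S | 0 < c j} + #{j ∈ S | 0 < -c j} ≤ #S := by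
    rw [← card_union_of_disjoint (disjoint_filter.2 fun j _ h => by simp [h.le])]
    exact card_le_card (union_subset (filter_subset _ _) (filter_subset _ _))
  rcases lt_or_ge #{j ∈ S | 0 < c j} M with hpos | hpos
  · exact hT.eq_zero_of_card_pos_lt hMN hc hpos
  · simpa using hT.eq_zero_of_card_pos_lt (c := fun j => -c j) hMN (by simpa using hc) (by omega)

end FullSpark

theorem stmt6_general {M N Kf : ℕ} (T : Matrix (Fin M) (Fin N) ℂ)
    (hMN : M ≤ N) (hfs : FullSpark T)
    (S : Finset (Fin N)) (hS : S.card = Kf)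
    (h2 : Kf < 2 * M) :
    LinearIndependent ℂ (fun j : S => (khatriRaoConj T).transpose j.1) := by
  refine linearIndepOn_finset_iff.2 fun g hg => ?_
  have hgram := sum_mul_normSq_vecMul_eq_zero hg
  have hcard : #S < 2 * M := hS ▸ h2
  have hre := hfs.eq_zero_of_sum_mul_normSq_eq_zero hMN hcard fun a => by
    simpa [Complex.re_sum] using congrArg Complex.re (hgram a)
  have him := hfs.eq_zero_of_sum_mul_normSq_eq_zero hMN hcard fun a => by
    simpa [Complex.im_sum] using congrArg Complex.im (hgram a)
  exact fun k hk => Complex.ext (hre k hk) (him k hk)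

theorem stmt6 {M N Kf : ℕ} (T : Matrix (Fin M) (Fin N) ℂ)
    (hMN : M ≤ N) (hfs : FullSpark T)
    (S : Finset (Fin N)) (hS : S.card = Kf)
    (h1 : Kf ≤ M ^ 2) (h2 : Kf < 2 * M) :
    LinearIndependent ℂ (fun j : S => (khatriRaoConj T).transpose j.1) :=
  stmt6_general T hMN hfs S hS h2
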